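/- arXiv:1612.01216 — 4 statements merged into one kernel-verified Lean document; each statement's English description precedes it below -/
import Mathlib

section
/- Let F be L-smooth on a convex compact set C with Euclidean diameter ρ̄, and suppose the iterates satisfy F(θ̄ₜ₊₁) ≤ F(θ̄ₜ) − γₜ gₜ + 2γₜρ̄(Δ_g,t + LΔ_p,t) + γₜ² Lρ̄²/2, where gₜ ≥ 0, γₜ = t^{−α} with α ∈ [1/2, 1), Δ_p,t = C_p t^{−α}, Δ_g,t = C_g t^{−α}, and F is G-Lipschitz so that F(θ̄_{T/2+1}) − F(θ̄_{T+1}) ≤ Gρ. Then for every even T ≥ 6, min_{t ∈ [T/2+1, T]} gₜ ≤ T^{α−1} · ((1−α)/(1−(2/3)^{1−α})) · (Gρ + (Lρ̄²/2 + 2ρ̄(C_g + LC_p))·log 2). -/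
/-!
Summing the descent inequality over the second half `(T/2, T]` of the run telescopes the
objective values, so `∑ γₜ gₜ ≤ Gρ + K ∑ γₜ²` with `K = Lρ̄²/2 + 2ρ̄(C_g + LC_p)`. Since
`2α ≥ 1`, `γₜ² ≤ 1/t`, and `∑_{T/2 < t ≤ T} 1/t ≤ log 2`. On the other hand, concavity of
`x ↦ x^{1-α}` gives `∑ γₜ ≥ (T^{1-α} - (T/2+1)^{1-α})/(1-α)`, and `T/2 + 1 ≤ 2T/3` for `T ≥ 6`.
The minimum of the `gₜ` is at most their `γ`-weighted average, whence the bound.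
-/

open Finset Real

theorem Finset.exists_le_div_of_sum_mul_le {ι : Type*} {s : Finset ι} (hs : s.Nonempty)
    {w f : ι → ℝ} {B W : ℝ} (hw : ∀ i ∈ s, 0 < w i) (hB : 0 ≤ B) (hW : 0 < W)
    (hWle : W ≤ ∑ i ∈ s, w i) (h : ∑ i ∈ s, w i * f i ≤ B) : ∃ i ∈ s, f i ≤ B / W := by
  have hsum : ∑ i ∈ s, w i * f i ≤ ∑ i ∈ s, w i * (B / W) := calc
    _ ≤ B := h
    _ = W * (B / W) := (mul_div_cancel₀ B hW.ne').symm
    _ ≤ _ := by rw [← sum_mul]; exact mul_le_mul_of_nonneg_right hWle (div_nonneg hB hW.le)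
  obtain ⟨i, hi, hle⟩ := exists_le_of_sum_le hs hsum
  exact ⟨i, hi, le_of_mul_le_mul_left hle (hw i hi)⟩

theorem Finset.sum_Ioc_sub_succ {M : Type*} [AddCommGroup M] (Φ : ℕ → M) {a b : ℕ}
    (hab : a ≤ b) : ∑ t ∈ Ioc a b, (Φ t - Φ (t + 1)) = Φ (a + 1) - Φ (b + 1) := by
  induction b, hab using Nat.le_induction with
  | base => simp
  | succ b hab ih => rw [sum_Ioc_succ_top hab, ih]; abel

theorem Real.rpow_add_one_sub_rpow_le {x p : ℝ} (hx : 0 < x) (hp0 : 0 ≤ p) (hp1 : p ≤ 1) :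
    (x + 1) ^ p - x ^ p ≤ p * x ^ (p - 1) := by
  have hbernoulli := rpow_one_add_le_one_add_mul_self (s := x⁻¹)
    (by linarith [inv_pos.2 hx]) hp0 hp1
  have hsplit : (x + 1) ^ p = x ^ p * (1 + x⁻¹) ^ p := by
    rw [← mul_rpow hx.le (by positivity), mul_add, mul_inv_cancel₀ hx.ne', mul_one]
  rw [hsplit, rpow_sub_one hx.ne', div_eq_mul_inv]
  nlinarith [mul_le_mul_of_nonneg_left hbernoulli (rpow_nonneg hx.le p)]

theorem Real.rpow_sub_rpow_le_mul_sum_Ioc {p : ℝ} (hp0 : 0 ≤ p) (hp1 : p ≤ 1) {a b : ℕ}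
    (hab : a ≤ b) :
    ((b : ℝ) + 1) ^ p - ((a : ℝ) + 1) ^ p ≤ p * ∑ t ∈ Ioc a b, (t : ℝ) ^ (p - 1) := by
  induction b, hab using Nat.le_induction with
  | base => simp
  | succ b hab ih =>
    have hstep := rpow_add_one_sub_rpow_le (x := (b : ℝ) + 1) (by positivity) hp0 hp1
    rw [sum_Ioc_succ_top hab, mul_add]
    push_cast
    linarith

theorem Real.sum_Ioc_inv_le_log_sub_log {a b : ℕ} (ha : 0 < a) (hab : a ≤ b) :
    ∑ t ∈ Ioc a b, (t : ℝ)⁻¹ ≤ log b - log a := by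
  induction b, hab using Nat.le_induction with
  | base => simp
  | succ b hab ih =>
    have hb : (0 : ℝ) < b := by exact_mod_cast ha.trans_le hab
    have hlog := one_sub_inv_le_log_of_pos (x := ((b : ℝ) + 1) / b) (by positivity)
    rw [log_div (by positivity) hb.ne', inv_div] at hlog
    have hinv : 1 - (b : ℝ) / (b + 1) = ((b : ℝ) + 1)⁻¹ := by field_simp; ring
    rw [sum_Ioc_succ_top hab]
    push_cast
    linarith

theorem Real.sum_Ioc_rpow_neg_sq_le_log_two {α : ℝ} (hα : 1 / 2 ≤ α) {a : ℕ} (ha : 0 < a) :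
    ∑ t ∈ Ioc a (2 * a), ((t : ℝ) ^ (-α)) ^ 2 ≤ log 2 := by
  calc ∑ t ∈ Ioc a (2 * a), ((t : ℝ) ^ (-α)) ^ 2
      ≤ ∑ t ∈ Ioc a (2 * a), (t : ℝ)⁻¹ := sum_le_sum fun t ht => ?_
    _ ≤ log ((2 * a : ℕ) : ℝ) - log a := sum_Ioc_inv_le_log_sub_log ha (by omega)
    _ = log 2 := by push_cast; rw [log_mul two_ne_zero (by positivity)]; ring
  have ht : (1 : ℝ) ≤ t := by exact_mod_cast (by have := (mem_Ioc.1 ht).1; omega : 1 ≤ t)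
  rw [← rpow_natCast, ← rpow_mul (by positivity), ← rpow_neg_one]
  exact rpow_le_rpow_of_exponent_le ht (by push_cast; linarith)

theorem Real.le_sum_Ioc_rpow_neg {α : ℝ} (hα0 : 0 ≤ α) (hα1 : α < 1) {a : ℕ} (ha : 3 ≤ a) :
    ((2 * a : ℕ) : ℝ) ^ (1 - α) * (1 - (2 / 3 : ℝ) ^ (1 - α)) / (1 - α)
      ≤ ∑ t ∈ Ioc a (2 * a), (t : ℝ) ^ (-α) := by
  have hp : 0 < 1 - α := by linarith
  have hsum := rpow_sub_rpow_le_mul_sum_Ioc hp.le (by linarith) (by omega : a ≤ 2 * a)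
  rw [sub_sub_cancel_left] at hsum
  set T : ℝ := ((2 * a : ℕ) : ℝ) with hT
  have hTa : T = 2 * a := by push_cast [hT]; ring
  have ha3 : (3 : ℝ) ≤ a := by exact_mod_cast ha
  have hupper : T ^ (1 - α) ≤ (T + 1) ^ (1 - α) :=
    rpow_le_rpow (by positivity) (by linarith) hp.le
  have hlower : ((a : ℝ) + 1) ^ (1 - α) ≤ (2 / 3 : ℝ) ^ (1 - α) * T ^ (1 - α) := by
    rw [← mul_rpow (by norm_num) (by positivity)]
    exact rpow_le_rpow (by positivity) (by linarith) hp.le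
  rw [div_le_iff₀ hp]
  linarith

theorem stmt_4_general (Φ g : ℕ → ℝ) (α L G ρ ρbar Cp Cg : ℝ)
    (hα : (1 : ℝ) / 2 ≤ α) (hα1 : α < 1)
    (hL : 0 ≤ L) (hρbar : 0 ≤ ρbar) (hCp : 0 ≤ Cp) (hCg : 0 ≤ Cg)
    (hg : ∀ t, 0 ≤ g t)
    (hdesc : ∀ t : ℕ, 1 ≤ t → Φ (t + 1) ≤ Φ t - (t : ℝ) ^ (-α) * g t
        + 2 * (t : ℝ) ^ (-α) * ρbar * (Cg * (t : ℝ) ^ (-α) + L * (Cp * (t : ℝ) ^ (-α)))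
        + ((t : ℝ) ^ (-α)) ^ 2 * L * ρbar ^ 2 / 2)
    (T : ℕ) (hT : 6 ≤ T) (hTeven : Even T)
    (hlip : Φ (T / 2 + 1) - Φ (T + 1) ≤ G * ρ) :
    ∃ t ∈ Finset.Icc (T / 2 + 1) T,
      g t ≤ (T : ℝ) ^ (α - 1) * ((1 - α) / (1 - (2 / 3 : ℝ) ^ (1 - α)))
        * (G * ρ + (L * ρbar ^ 2 / 2 + 2 * ρbar * (Cg + L * Cp)) * Real.log 2) := by
  obtain ⟨a, rfl⟩ := even_iff_two_dvd.mp hTeven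
  rw [Nat.mul_div_cancel_left a two_pos] at hlip ⊢
  rw [Icc_add_one_left_eq_Ioc]
  set K := L * ρbar ^ 2 / 2 + 2 * ρbar * (Cg + L * Cp)
  set M := G * ρ + K * log 2
  have hweighted : ∑ t ∈ Ioc a (2 * a), (t : ℝ) ^ (-α) * g t ≤ M := calc
    _ ≤ ∑ t ∈ Ioc a (2 * a), (Φ t - Φ (t + 1) + K * ((t : ℝ) ^ (-α)) ^ 2) :=
        sum_le_sum fun t ht => by
          linear_combination hdesc t (by have := (mem_Ioc.1 ht).1; omega)
    _ = Φ (a + 1) - Φ (2 * a + 1) + K * ∑ t ∈ Ioc a (2 * a), ((t : ℝ) ^ (-α)) ^ 2 := by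
        rw [sum_add_distrib, sum_Ioc_sub_succ Φ (by omega), mul_sum]
    _ ≤ M := add_le_add hlip <| mul_le_mul_of_nonneg_left
        (sum_Ioc_rpow_neg_sq_le_log_two hα (by omega)) (by positivity)
  have hM : 0 ≤ M := (sum_nonneg fun t _ => mul_nonneg (by positivity) (hg t)).trans hweighted
  have hT0 : (0 : ℝ) < ((2 * a : ℕ) : ℝ) := by positivity
  have hp : 0 < 1 - α := by linarith
  have hc : 0 < 1 - (2 / 3 : ℝ) ^ (1 - α) := sub_pos.2 (rpow_lt_one (by norm_num) (by norm_num) hp)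
  obtain ⟨t, ht, hgt⟩ := exists_le_div_of_sum_mul_le ⟨a + 1, mem_Ioc.2 ⟨by omega, by omega⟩⟩
    (fun t ht => rpow_pos_of_pos (Nat.cast_pos.2 (by have := (mem_Ioc.1 ht).1; omega)) _) hM
    (div_pos (mul_pos (rpow_pos_of_pos hT0 _) hc) hp)
    (le_sum_Ioc_rpow_neg (by linarith) hα1 (by omega)) hweighted
  refine ⟨t, ht, hgt.trans_eq ?_⟩
  rw [show α - 1 = -(1 - α) by ring, rpow_neg hT0.le]
  field_simp

/-- Non-convex rate (Theorem 2, case `α ∈ [1/2,1)`): the per-iteration descent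
inequality for the inexact Frank-Wolfe step implies that the minimum duality gap over
`[T/2+1, T]` is `O(T^{α-1})` for every even `T ≥ 6`. Here `Φ t = F (θ̄ t)`. -/
theorem stmt_4 (Φ g : ℕ → ℝ) (α L G ρ ρbar Cp Cg : ℝ)
    (hα : (1 : ℝ) / 2 ≤ α) (hα1 : α < 1)
    (hL : 0 ≤ L) (hG : 0 ≤ G) (hρ : 0 ≤ ρ) (hρbar : 0 ≤ ρbar) (hCp : 0 ≤ Cp) (hCg : 0 ≤ Cg)
    (hg : ∀ t, 0 ≤ g t)
    (hdesc : ∀ t : ℕ, 1 ≤ t → Φ (t + 1) ≤ Φ t - (t : ℝ) ^ (-α) * g t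
        + 2 * (t : ℝ) ^ (-α) * ρbar * (Cg * (t : ℝ) ^ (-α) + L * (Cp * (t : ℝ) ^ (-α)))
        + ((t : ℝ) ^ (-α)) ^ 2 * L * ρbar ^ 2 / 2)
    (T : ℕ) (hT : 6 ≤ T) (hTeven : Even T)
    (hlip : Φ (T / 2 + 1) - Φ (T + 1) ≤ G * ρ) :
    ∃ t ∈ Finset.Icc (T / 2 + 1) T,
      g t ≤ (T : ℝ) ^ (α - 1) * ((1 - α) / (1 - (2 / 3 : ℝ) ^ (1 - α)))
        * (G * ρ + (L * ρbar ^ 2 / 2 + 2 * ρbar * (Cg + L * Cp)) * Real.log 2) :=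
  stmt_4_general Φ g α L G ρ ρbar Cp Cg hα hα1 hL hρbar hCp hCg hg hdesc T hT hTeven hlip
end

section
/- Let C ⊂ ℝ^d be convex compact with Euclidean diameter ρ̄, and W doubly stochastic with |λ₂(W)| < 1. Fix α ∈ (0,1] and let t₀ be the smallest integer with |λ₂(W)| ≤ (t₀/(t₀+1))^α / (1 + t₀^{−α}). Suppose iterates are generated by θₜ₊₁ⁱ = (1−t^{−α})θ̄ₜⁱ + t^{−α}aₜⁱ with aₜⁱ ∈ C, and θ̄ₜ₊₁ⁱ = ∑ⱼ W_{ij}θₜ₊₁ʲ, with all θ̄₁ⁱ ∈ C. Then for all t ≥ 1, √(∑ᵢ ‖θ̄ₜⁱ − θ̄ₜ‖₂²) ≤ t₀^α √N ρ̄ / t^α, where θ̄ₜ = (1/N)∑ᵢ θₜⁱ. -/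
/-!
Let `e t` be the ℓ² distance of the averaged iterates `θ̄ₜ` from the consensus point `mean θₜ`.
By convexity all `θₜⁱ` and `θ̄ₜⁱ` lie in `C`, so `e t ≤ √N ρ̄`; this settles `t ≤ t₀`.
The distance of a configuration from its own mean is a seminorm, and the mean is the closest
consensus point, so the mixing step `θₜ₊₁ = (1 - γ) θ̄ₜ + γ aₜ` with `γ = t^{-α}`, followed by the
contraction of `W`, gives `e (t + 1) ≤ λ ((1 - γ) e t + γ √N ρ̄)`. The defining inequality of `t₀`
is what lets the bound `t₀^α √N ρ̄ / t^α` pass through this recursion once `t ≥ t₀`.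
-/

noncomputable section

namespace Consensus

variable {ι E : Type*} [Fintype ι] [NormedAddCommGroup E]

def consensusDist (x : ι → E) (c : E) : ℝ := √(∑ i, ‖x i - c‖ ^ 2)

theorem consensusDist_eq_norm (x : ι → E) (c : E) :
    consensusDist x c = ‖WithLp.toLp 2 (fun i => x i - c)‖ := by
  rw [PiLp.norm_eq_of_L2]; rfl

theorem consensusDist_le_of_mem {C : Set E} (hC : Bornology.IsBounded C) {x : ι → E} {c : E}
    (hx : ∀ i, x i ∈ C) (hc : c ∈ C) :
    consensusDist x c ≤ √(Fintype.card ι) * Metric.diam C := by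
  have hsum : ∑ i, ‖x i - c‖ ^ 2 ≤ Fintype.card ι * Metric.diam C ^ 2 := by
    calc ∑ i, ‖x i - c‖ ^ 2 ≤ ∑ _i : ι, Metric.diam C ^ 2 := by
          gcongr with i
          rw [← dist_eq_norm]
          exact Metric.dist_le_diam_of_mem hC (hx i) hc
      _ = _ := by simp
  calc consensusDist x c ≤ √(Fintype.card ι * Metric.diam C ^ 2) := Real.sqrt_le_sqrt hsum
    _ = _ := by rw [Real.sqrt_mul (by positivity), Real.sqrt_sq Metric.diam_nonneg]

section NormedSpace

variable [NormedSpace ℝ E]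

def mean (x : ι → E) : E := (Fintype.card ι : ℝ)⁻¹ • ∑ i, x i

def spread (x : ι → E) : ℝ := consensusDist x (mean x)

theorem sum_sub_mean (x : ι → E) : ∑ i, (x i - mean x) = 0 := by
  cases isEmpty_or_nonempty ι
  · simp
  · rw [Finset.sum_sub_distrib, Finset.sum_const, Finset.card_univ, mean,
      ← Nat.cast_smul_eq_nsmul ℝ, smul_inv_smul₀ (by positivity), sub_self]

theorem mean_add (x y : ι → E) : mean (x + y) = mean x + mean y := by
  simp only [mean, Pi.add_apply, Finset.sum_add_distrib, smul_add]

theorem mean_smul (c : ℝ) (x : ι → E) : mean (c • x) = c • mean x := by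
  simp only [mean, Pi.smul_apply, ← Finset.smul_sum, smul_comm c]

theorem mean_mem [Nonempty ι] {C : Set E} (hC : Convex ℝ C) {x : ι → E} (hx : ∀ i, x i ∈ C) :
    mean x ∈ C := by
  rw [mean, Finset.smul_sum]
  refine hC.sum_mem (fun _ _ => by positivity) ?_ fun i _ => hx i
  simp [Finset.card_univ]

theorem spread_add_le (x y : ι → E) : spread (x + y) ≤ spread x + spread y := by
  have h : (WithLp.toLp 2 fun i => (x + y) i - (mean x + mean y)) =
      WithLp.toLp 2 (fun i => x i - mean x) + WithLp.toLp 2 (fun i => y i - mean y) := by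
    rw [← WithLp.toLp_add]
    congr 1
    ext i
    simp only [Pi.add_apply]
    abel
  simp only [spread, consensusDist_eq_norm, mean_add, h]
  exact norm_add_le _ _

theorem spread_smul (c : ℝ) (x : ι → E) : spread (c • x) = |c| * spread x := by
  simp only [spread, consensusDist_eq_norm, mean_smul, ← Real.norm_eq_abs, ← norm_smul]
  congr 1
  ext i
  simp [smul_sub]

theorem consensusDist_mulVec_le {W : Matrix ι ι ℝ} {lam : ℝ} (hrow : ∀ i, ∑ j, W i j = 1)
    (hlam : ∀ v : ι → E, ∑ i, v i = 0 →
      √(∑ i, ‖∑ j, W i j • v j‖ ^ 2) ≤ lam * √(∑ i, ‖v i‖ ^ 2))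
    (x : ι → E) :
    consensusDist (fun i => ∑ j, W i j • x j) (mean x) ≤ lam * spread x := by
  have hW : ∀ i, ∑ j, W i j • x j - mean x = ∑ j, W i j • (x j - mean x) := by
    intro i
    simp only [smul_sub, Finset.sum_sub_distrib, ← Finset.sum_smul, hrow, one_smul]
  simpa only [consensusDist, spread, hW] using hlam _ (sum_sub_mean x)

theorem spread_add_smul_le (b c : ℝ) (x y : ι → E) :
    spread (b • x + c • y) ≤ |b| * spread x + |c| * spread y := by
  rw [← spread_smul, ← spread_smul]
  exact spread_add_le _ _

end NormedSpace

section InnerProductSpace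

variable [InnerProductSpace ℝ E]

theorem sum_norm_sub_sq_eq (x : ι → E) (c : E) :
    ∑ i, ‖x i - c‖ ^ 2 = ∑ i, ‖x i - mean x‖ ^ 2 + Fintype.card ι * ‖mean x - c‖ ^ 2 := by
  have h : ∀ i, ‖x i - c‖ ^ 2 =
      ‖x i - mean x‖ ^ 2 + 2 * inner ℝ (x i - mean x) (mean x - c) + ‖mean x - c‖ ^ 2 := by
    intro i
    rw [← norm_add_sq_real, sub_add_sub_cancel]
  simp only [h, Finset.sum_add_distrib, ← Finset.mul_sum, ← sum_inner, sum_sub_mean,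
    inner_zero_left, mul_zero, add_zero, Finset.sum_const, Finset.card_univ, nsmul_eq_mul]

theorem spread_le_consensusDist (x : ι → E) (c : E) : spread x ≤ consensusDist x c := by
  refine Real.sqrt_le_sqrt ?_
  rw [sum_norm_sub_sq_eq x c]
  exact le_add_of_nonneg_right (by positivity)

theorem consensusDist_step_le {W : Matrix ι ι ℝ} {lam γ R : ℝ} (hrow : ∀ i, ∑ j, W i j = 1)
    (hlam : ∀ v : ι → E, ∑ i, v i = 0 →
      √(∑ i, ‖∑ j, W i j • v j‖ ^ 2) ≤ lam * √(∑ i, ‖v i‖ ^ 2))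
    (hlam0 : 0 ≤ lam) (hγ0 : 0 ≤ γ) (hγ1 : γ ≤ 1) (y a : ι → E) (c : E) (ha : spread a ≤ R) :
    consensusDist (fun i => ∑ j, W i j • ((1 - γ) • y + γ • a) j) (mean ((1 - γ) • y + γ • a))
      ≤ lam * ((1 - γ) * consensusDist y c + γ * R) := by
  refine (consensusDist_mulVec_le hrow hlam _).trans (mul_le_mul_of_nonneg_left ?_ hlam0)
  calc spread ((1 - γ) • y + γ • a) ≤ |1 - γ| * spread y + |γ| * spread a :=
        spread_add_smul_le _ _ _ _
    _ ≤ (1 - γ) * consensusDist y c + γ * R := by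
        rw [abs_of_nonneg (by linarith), abs_of_nonneg hγ0]
        gcongr
        exact spread_le_consensusDist y c

end InnerProductSpace

end Consensus

end

open Consensus

theorem natCast_rpow_neg_mem_Icc {α : ℝ} (hα : 0 ≤ α) {t : ℕ} (ht : 1 ≤ t) :
    (t : ℝ) ^ (-α) ∈ Set.Icc 0 1 :=
  ⟨by positivity, Real.rpow_le_one_of_one_le_of_nonpos (by exact_mod_cast ht) (by linarith)⟩

theorem le_rpow_div_of_recursion {α lam R : ℝ} {t₀ : ℕ} {e : ℕ → ℝ} (hα : 0 ≤ α) (hlam0 : 0 ≤ lam)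
    (hR : 0 ≤ R) (ht₀ : 1 ≤ t₀)
    (hlam : lam ≤ ((t₀ : ℝ) / ((t₀ : ℝ) + 1)) ^ α / (1 + (t₀ : ℝ) ^ (-α)))
    (hbdd : ∀ t, 1 ≤ t → e t ≤ R)
    (hstep : ∀ t, 1 ≤ t →
      e (t + 1) ≤ lam * ((1 - (t : ℝ) ^ (-α)) * e t + (t : ℝ) ^ (-α) * R)) :
    ∀ t, 1 ≤ t → e t ≤ (t₀ : ℝ) ^ α * R / (t : ℝ) ^ α := by
  have hpos : ∀ t : ℕ, 1 ≤ t → 0 < (t : ℝ) ^ α := fun t ht =>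
    Real.rpow_pos_of_pos (by exact_mod_cast ht) α
  have hcrude : ∀ t, 1 ≤ t → t ≤ t₀ → e t ≤ (t₀ : ℝ) ^ α * R / (t : ℝ) ^ α := by
    intro t ht htt₀
    rw [le_div_iff₀ (hpos t ht), mul_comm ((t₀ : ℝ) ^ α) R]
    exact mul_le_mul (hbdd t ht) (Real.rpow_le_rpow (by positivity) (by exact_mod_cast htt₀) hα)
      (hpos t ht).le hR
  intro t ht
  induction t, ht using Nat.le_induction with
  | base => exact hcrude 1 le_rfl ht₀
  | succ t ht ih =>
    rcases le_or_gt (t + 1) t₀ with h | h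
    · exact hcrude _ (by omega) h
    set X := (t₀ : ℝ) ^ α * R / (t : ℝ) ^ α with hX
    have hX0 : 0 ≤ X := by positivity
    obtain ⟨hγ0, hγ1⟩ := natCast_rpow_neg_mem_Icc hα ht
    have hγR : (t : ℝ) ^ (-α) * R = X * (t₀ : ℝ) ^ (-α) := by
      rw [hX, Real.rpow_neg (by positivity), Real.rpow_neg (by positivity)]
      field_simp [(hpos t₀ ht₀).ne']
    have hmix : (1 - (t : ℝ) ^ (-α)) * e t + (t : ℝ) ^ (-α) * R ≤ X * (1 + (t₀ : ℝ) ^ (-α)) := by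
      rw [hγR, mul_add, mul_one]
      linarith [mul_le_mul_of_nonneg_left ih (sub_nonneg.2 hγ1), mul_nonneg hγ0 hX0]
    have hratio : ((t₀ : ℝ) / ((t₀ : ℝ) + 1)) ^ α ≤ ((t : ℝ) / ((t : ℝ) + 1)) ^ α := by
      refine Real.rpow_le_rpow (by positivity) ?_ hα
      rw [div_le_div_iff₀ (by positivity) (by positivity)]
      have : (t₀ : ℝ) ≤ t := by exact_mod_cast (show t₀ ≤ t by omega)
      nlinarith
    have hlam' : lam * (1 + (t₀ : ℝ) ^ (-α)) ≤ ((t : ℝ) / ((t : ℝ) + 1)) ^ α :=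
      ((le_div_iff₀ (by positivity)).mp hlam).trans hratio
    calc e (t + 1) ≤ lam * ((1 - (t : ℝ) ^ (-α)) * e t + (t : ℝ) ^ (-α) * R) := hstep t ht
      _ ≤ lam * (1 + (t₀ : ℝ) ^ (-α)) * X := by
          rw [mul_assoc, mul_comm _ X]
          exact mul_le_mul_of_nonneg_left hmix hlam0
      _ ≤ ((t : ℝ) / ((t : ℝ) + 1)) ^ α * X := mul_le_mul_of_nonneg_right hlam' hX0
      _ = (t₀ : ℝ) ^ α * R / ((t + 1 : ℕ) : ℝ) ^ α := by
          rw [hX, Real.div_rpow (by positivity) (by positivity)]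
          push_cast
          field_simp [(hpos t ht).ne']

theorem stmt_8_general (N d : ℕ) (hN : 0 < N)
    (C : Set (EuclideanSpace ℝ (Fin d))) (hC : Convex ℝ C) (hCcpt : IsCompact C)
    (ρ : ℝ) (hρ : Metric.diam C = ρ)
    (W : Matrix (Fin N) (Fin N) ℝ) (hWnonneg : ∀ i j, 0 ≤ W i j)
    (hrow : ∀ i, ∑ j, W i j = 1)
    (lam : ℝ) (hlam0 : 0 ≤ lam)
    (hlam : ∀ v : Fin N → EuclideanSpace ℝ (Fin d), (∑ i, v i) = 0 →
      Real.sqrt (∑ i, ‖∑ j, W i j • v j‖ ^ 2) ≤ lam * Real.sqrt (∑ i, ‖v i‖ ^ 2))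
    (α : ℝ) (hα0 : 0 < α)
    (t₀ : ℕ)
    (ht₀ : IsLeast {n : ℕ | 1 ≤ n ∧
      lam ≤ ((n : ℝ) / ((n : ℝ) + 1)) ^ α / (1 + (n : ℝ) ^ (-α))} t₀)
    (θ θbar : ℕ → Fin N → EuclideanSpace ℝ (Fin d))
    (a : ℕ → Fin N → EuclideanSpace ℝ (Fin d)) (haC : ∀ t i, a t i ∈ C)
    (hθ1 : ∀ i, θ 1 i ∈ C) (hθbar1 : ∀ i, θbar 1 i ∈ C)
    (hupd : ∀ t : ℕ, 1 ≤ t → ∀ i,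
      θ (t + 1) i = (1 - (t : ℝ) ^ (-α)) • θbar t i + (t : ℝ) ^ (-α) • a t i)
    (hcons : ∀ t : ℕ, 1 ≤ t → ∀ i, θbar (t + 1) i = ∑ j, W i j • θ (t + 1) j) :
    ∀ t : ℕ, 1 ≤ t →
      Real.sqrt (∑ i, ‖θbar t i - (N : ℝ)⁻¹ • ∑ j, θ t j‖ ^ 2)
        ≤ (t₀ : ℝ) ^ α * Real.sqrt N * ρ / (t : ℝ) ^ α := by
  have : Nonempty (Fin N) := ⟨⟨0, hN⟩⟩
  have hγ := fun t (ht : 1 ≤ t) => natCast_rpow_neg_mem_Icc hα0.le ht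
  have hmem : ∀ t, 1 ≤ t → (∀ i, θ t i ∈ C) ∧ ∀ i, θbar t i ∈ C := by
    intro t ht
    induction t, ht using Nat.le_induction with
    | base => exact ⟨hθ1, hθbar1⟩
    | succ t ht ih =>
      have hθ : ∀ i, θ (t + 1) i ∈ C := fun i => hupd t ht i ▸
        hC (ih.2 i) (haC t i) (by linarith [(hγ t ht).2]) (hγ t ht).1 (by ring)
      exact ⟨hθ, fun i => hcons t ht i ▸
        hC.sum_mem (fun j _ => hWnonneg i j) (hrow i) fun j _ => hθ j⟩
  have hdiam : ∀ (x : Fin N → EuclideanSpace ℝ (Fin d)) c, (∀ i, x i ∈ C) → c ∈ C →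
      consensusDist x c ≤ √N * ρ := fun x c hx hc => by
    simpa [hρ] using consensusDist_le_of_mem hCcpt.isBounded hx hc
  have hbound := le_rpow_div_of_recursion (e := fun t => consensusDist (θbar t) (mean (θ t)))
    hα0.le hlam0 (mul_nonneg (Real.sqrt_nonneg _) (hρ ▸ Metric.diam_nonneg)) ht₀.1.1 ht₀.1.2
    (fun t ht => hdiam _ _ (hmem t ht).2 (mean_mem hC (hmem t ht).1))
    (fun t ht => by
      simp only [funext (hcons t ht), funext (hupd t ht)]
      exact consensusDist_step_le hrow hlam hlam0 (hγ t ht).1 (hγ t ht).2 _ _ _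
        (hdiam _ _ (haC t) (mean_mem hC (haC t))))
  intro t ht
  simpa [consensusDist, mean, mul_assoc] using hbound t ht

/-- Lemma 3: consensus error of the iterate-averaging step of DeFW decays as
`t₀^α √N ρ̄ / t^α`, where `t₀` is the smallest integer satisfying the spectral condition
and `lam` is the second largest eigenvalue magnitude of `W` (characterized by its
contraction on mean-zero configurations). -/
theorem stmt_8 (N d : ℕ) (hN : 0 < N)
    (C : Set (EuclideanSpace ℝ (Fin d))) (hC : Convex ℝ C) (hCcpt : IsCompact C)
    (ρ : ℝ) (hρ : Metric.diam C = ρ)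
    (W : Matrix (Fin N) (Fin N) ℝ) (hWnonneg : ∀ i j, 0 ≤ W i j)
    (hrow : ∀ i, ∑ j, W i j = 1) (hcol : ∀ j, ∑ i, W i j = 1)
    (lam : ℝ) (hlam0 : 0 ≤ lam) (hlam1 : lam < 1)
    (hlam : ∀ v : Fin N → EuclideanSpace ℝ (Fin d), (∑ i, v i) = 0 →
      Real.sqrt (∑ i, ‖∑ j, W i j • v j‖ ^ 2) ≤ lam * Real.sqrt (∑ i, ‖v i‖ ^ 2))
    (α : ℝ) (hα0 : 0 < α) (hα1 : α ≤ 1)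
    (t₀ : ℕ)
    (ht₀ : IsLeast {n : ℕ | 1 ≤ n ∧
      lam ≤ ((n : ℝ) / ((n : ℝ) + 1)) ^ α / (1 + (n : ℝ) ^ (-α))} t₀)
    (θ θbar : ℕ → Fin N → EuclideanSpace ℝ (Fin d))
    (a : ℕ → Fin N → EuclideanSpace ℝ (Fin d)) (haC : ∀ t i, a t i ∈ C)
    (hθ1 : ∀ i, θ 1 i ∈ C) (hθbar1 : ∀ i, θbar 1 i ∈ C)
    (hupd : ∀ t : ℕ, 1 ≤ t → ∀ i,
      θ (t + 1) i = (1 - (t : ℝ) ^ (-α)) • θbar t i + (t : ℝ) ^ (-α) • a t i)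
    (hcons : ∀ t : ℕ, 1 ≤ t → ∀ i, θbar (t + 1) i = ∑ j, W i j • θ (t + 1) j) :
    ∀ t : ℕ, 1 ≤ t →
      Real.sqrt (∑ i, ‖θbar t i - (N : ℝ)⁻¹ • ∑ j, θ t j‖ ^ 2)
        ≤ (t₀ : ℝ) ^ α * Real.sqrt N * ρ / (t : ℝ) ^ α :=
  stmt_8_general N d hN C hC hCcpt ρ hρ W hWnonneg hrow lam hlam0 hlam α hα0 t₀ ht₀ θ θbar a haC hθ1
    hθbar1 hupd hcons
end

section
/- Suppose t₀ ≥ 1 satisfies |λ₂| ≤ (t₀/(t₀+1))^α · 1/(1 + t₀^{−α}) with 0 ≤ |λ₂| < 1, α ∈ (0,1]. Then for every t ≥ t₀, |λ₂| · (t₀^α + 1)/(t₀^α · t^α) ≤ 1/(t+1)^α. -/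
/-- Key induction-step inequality for Lemmas 3 and 4: the contraction by `lam`
compensates the growth of the bound `C/t^α` to `C/(t+1)^α` for all `t ≥ t₀`. -/
theorem stmt_9 (lam α : ℝ) (hlam0 : 0 ≤ lam) (hlam1 : lam < 1)
    (hα0 : 0 < α) (hα1 : α ≤ 1) (t₀ : ℕ) (ht₀1 : 1 ≤ t₀)
    (h : lam ≤ ((t₀ : ℝ) / ((t₀ : ℝ) + 1)) ^ α / (1 + (t₀ : ℝ) ^ (-α)))
    (t : ℕ) (ht : t₀ ≤ t) :
    lam * (((t₀ : ℝ) ^ α + 1) / ((t₀ : ℝ) ^ α * (t : ℝ) ^ α)) ≤ 1 / ((t : ℝ) + 1) ^ α := by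
  have ht₀pos : (0:ℝ) < (t₀:ℝ) := by exact_mod_cast ht₀1
  have htpos : (0:ℝ) < (t:ℝ) := lt_of_lt_of_le ht₀pos (by exact_mod_cast ht)
  have hA : (0:ℝ) < (t₀:ℝ) ^ α := Real.rpow_pos_of_pos ht₀pos α
  have hB : (0:ℝ) < (t:ℝ) ^ α := Real.rpow_pos_of_pos htpos α
  have hC : (0:ℝ) < ((t:ℝ) + 1) ^ α := Real.rpow_pos_of_pos (by linarith) α
  have hneg : (t₀:ℝ) ^ (-α) = 1 / (t₀:ℝ) ^ α := by
    rw [Real.rpow_neg ht₀pos.le, one_div]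
  have hden : (0:ℝ) < 1 + (t₀:ℝ) ^ (-α) := by
    rw [hneg]; positivity
  have h1 : lam * (1 + (t₀:ℝ) ^ (-α)) ≤ ((t₀ : ℝ) / ((t₀ : ℝ) + 1)) ^ α :=
    (le_div_iff₀ hden).mp h
  -- ratio monotone
  have hratio : (t₀:ℝ) / ((t₀:ℝ) + 1) ≤ (t:ℝ) / ((t:ℝ) + 1) := by
    rw [div_le_div_iff₀ (by linarith) (by linarith)]
    have : (t₀:ℝ) ≤ (t:ℝ) := by exact_mod_cast ht
    nlinarith
  have h2 : ((t₀ : ℝ) / ((t₀ : ℝ) + 1)) ^ α ≤ ((t : ℝ) / ((t : ℝ) + 1)) ^ α :=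
    Real.rpow_le_rpow (by positivity) hratio hα0.le
  have h3 : ((t : ℝ) / ((t : ℝ) + 1)) ^ α = (t:ℝ) ^ α / ((t:ℝ) + 1) ^ α :=
    Real.div_rpow htpos.le (by linarith) α
  have key : lam * (1 + (t₀:ℝ) ^ (-α)) ≤ (t:ℝ) ^ α / ((t:ℝ) + 1) ^ α := by
    calc lam * (1 + (t₀:ℝ) ^ (-α)) ≤ _ := h1
      _ ≤ _ := h2
      _ = _ := h3
  have hrw : ((t₀ : ℝ) ^ α + 1) / ((t₀ : ℝ) ^ α * (t : ℝ) ^ α)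
      = (1 + (t₀:ℝ) ^ (-α)) / (t:ℝ) ^ α := by
    rw [hneg]; field_simp
  rw [hrw, ← mul_div_assoc, div_le_div_iff₀ hB hC, one_mul]
  exact (le_div_iff₀ hC).mp key
end

section
/- Let W be doubly stochastic with |λ₂(W)| < 1, let ∇Fₜ ∈ ℝ^{d×N} be matrices (columns = local gradients) with ‖vec(∇Fₜ − ∇Fₜ₋₁)‖₂ ≤ √N L ρ̄ for all t ≥ 2, and define E₁ = ∇F₁(W − (1/N)𝟙𝟙ᵀ), Eₜ = (Eₜ₋₁ + ∇Fₜ − ∇Fₜ₋₁)(W − (1/N)𝟙𝟙ᵀ). If ‖vec(∇F₁)‖₂ ≤ √N B₁, then ‖vec(Eₜ)‖₂ ≤ |λ₂|·√N·(Lρ̄/(1−|λ₂|) + B₁) for all t ≥ 1. -/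
open scoped BigOperators

/-- Base-case bound of Lemma 4: the gradient-tracking error matrices `Eₜ`, generated by
right-multiplication with the deviation matrix `W - (1/N)𝟙𝟙ᵀ` (whose operator norm is
`lam = |λ₂(W)|`), satisfy a uniform bound `lam √N (Lρ̄/(1-lam) + B₁)`. -/
theorem stmt_12 (d N : ℕ) (hN : 0 < N)
    (W : Matrix (Fin N) (Fin N) ℝ)
    (hrow : ∀ i, ∑ j, W i j = 1) (hcol : ∀ j, ∑ i, W i j = 1)
    (lam L ρ B₁ : ℝ) (hlam0 : 0 ≤ lam) (hlam1 : lam < 1) (hL : 0 ≤ L) (hρ : 0 ≤ ρ)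
    (hB : 0 ≤ B₁)
    (J : Matrix (Fin N) (Fin N) ℝ) (hJ : ∀ i j, J i j = (N : ℝ)⁻¹)
    (hlam : ∀ M : Matrix (Fin d) (Fin N) ℝ,
      Real.sqrt (∑ i, ∑ j, (M * (W - J)) i j ^ 2) ≤ lam * Real.sqrt (∑ i, ∑ j, M i j ^ 2))
    (gF E : ℕ → Matrix (Fin d) (Fin N) ℝ)
    (hinc : ∀ t : ℕ, 1 ≤ t →
      Real.sqrt (∑ i, ∑ j, (gF (t + 1) - gF t) i j ^ 2) ≤ Real.sqrt N * L * ρ)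
    (hinit : Real.sqrt (∑ i, ∑ j, gF 1 i j ^ 2) ≤ Real.sqrt N * B₁)
    (hE1 : E 1 = gF 1 * (W - J))
    (hErec : ∀ t : ℕ, 1 ≤ t → E (t + 1) = (E t + gF (t + 1) - gF t) * (W - J)) :
    ∀ t : ℕ, 1 ≤ t →
      Real.sqrt (∑ i, ∑ j, E t i j ^ 2) ≤ lam * Real.sqrt N * (L * ρ / (1 - lam) + B₁) := by
  set nrm : Matrix (Fin d) (Fin N) ℝ → ℝ := fun M => Real.sqrt (∑ i, ∑ j, M i j ^ 2) with hnrmdef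
  have toE : ∀ M : Matrix (Fin d) (Fin N) ℝ, nrm M =
      ‖(WithLp.equiv 2 ((Fin d × Fin N) → ℝ)).symm (fun p => M p.1 p.2)‖ := by
    intro M
    rw [EuclideanSpace.norm_eq]
    simp [hnrmdef, Fintype.sum_prod_type, Real.norm_eq_abs, sq_abs]
  have tri : ∀ A B : Matrix (Fin d) (Fin N) ℝ, nrm (A + B) ≤ nrm A + nrm B := by
    intro A B
    rw [toE, toE, toE]
    have heq : (WithLp.equiv 2 ((Fin d × Fin N) → ℝ)).symm (fun p => (A + B) p.1 p.2)
        = (WithLp.equiv 2 ((Fin d × Fin N) → ℝ)).symm (fun p => A p.1 p.2)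
          + (WithLp.equiv 2 ((Fin d × Fin N) → ℝ)).symm (fun p => B p.1 p.2) := rfl
    rw [heq]
    exact norm_add_le _ _
  have hsN : (0:ℝ) ≤ Real.sqrt N := Real.sqrt_nonneg _
  have hden : (0:ℝ) < 1 - lam := by linarith
  have hfrac : 0 ≤ L * ρ / (1 - lam) := div_nonneg (mul_nonneg hL hρ) hden.le
  have hstep : lam * (lam * (L * ρ / (1 - lam) + B₁) + L * ρ) ≤
      lam * (L * ρ / (1 - lam) + B₁) := by
    have h1 : lam * (L * ρ / (1 - lam)) + L * ρ = L * ρ / (1 - lam) := by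
      field_simp
      ring
    have h2 : lam * (L * ρ / (1 - lam) + B₁) + L * ρ ≤ L * ρ / (1 - lam) + B₁ := by
      have hb : lam * B₁ ≤ B₁ := by nlinarith
      nlinarith
    exact mul_le_mul_of_nonneg_left h2 hlam0
  intro t ht
  induction t, ht using Nat.le_induction with
  | base =>
      rw [hE1]
      calc nrm (gF 1 * (W - J)) ≤ lam * nrm (gF 1) := hlam _
        _ ≤ lam * (Real.sqrt N * B₁) := mul_le_mul_of_nonneg_left hinit hlam0
        _ ≤ lam * Real.sqrt N * (L * ρ / (1 - lam) + B₁) := by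
            rw [mul_assoc]
            refine mul_le_mul_of_nonneg_left ?_ hlam0
            nlinarith
  | succ t ht ih =>
      rw [hErec t ht]
      have h1 : nrm (E t + gF (t + 1) - gF t) ≤ nrm (E t) + nrm (gF (t + 1) - gF t) := by
        have heq : E t + gF (t + 1) - gF t = E t + (gF (t + 1) - gF t) := by abel
        rw [heq]
        exact tri _ _
      calc nrm ((E t + gF (t + 1) - gF t) * (W - J))
          ≤ lam * nrm (E t + gF (t + 1) - gF t) := hlam _
        _ ≤ lam * (nrm (E t) + nrm (gF (t + 1) - gF t)) :=
            mul_le_mul_of_nonneg_left h1 hlam0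
        _ ≤ lam * (lam * Real.sqrt N * (L * ρ / (1 - lam) + B₁) + Real.sqrt N * L * ρ) :=
            mul_le_mul_of_nonneg_left (add_le_add ih (hinc t ht)) hlam0
        _ ≤ lam * Real.sqrt N * (L * ρ / (1 - lam) + B₁) := by
            have h3 := mul_le_mul_of_nonneg_left hstep hsN
            nlinarith [mul_nonneg hsN hlam0]
end
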